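/- Fix n and positions with 1bar at position i and 1 at position j, i < j, in a complete Gessel word of length 2n with exactly one 1 and one 1bar. Then the number of such words equals the sum over k1 from 1 to i-1 and k2 from 0 to j-1 of a_{0,k1}(i-1) * a_{k1-1,k2-1}(j-i-1) * a_{k2,0}(2n-j), where a_{p,q}(m) is the number of nonnegative lattice paths from height p to height q in m up/down steps. -/

import Mathlib

/-!
Reading `2` as an up step and `2̄` as a down step, the excess `N₂ - N_{2̄}` of the prefixes of a
word is a lattice path that pauses at the `1̄` and at the `1`. With these two letters fixed, the
Gessel conditions say exactly that this path stays `≥ 0` everywhere and `≥ 1` between the `1̄` and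
the `1`, and completeness says that it ends at `0`. Cutting the word at the `1̄` and the `1` and
recording the heights `k₁, k₂` there is therefore a bijection onto triples of nonnegative paths
`0 → k₁`, `k₁ - 1 → k₂ - 1` (the middle one shifted down by one) and `k₂ → 0`. Nonnegative paths
are counted by the reflection formula `aCount`, since both obey the same recursion in the end
point and `aCount` vanishes at end point `-1`.
-/

/-- The alphabet of Gessel words: letters `1`, `2`, `1̄`, `2̄`. -/
inductive GLetter | one | two | onebar | twobar
deriving DecidableEq

instance : Fintype GLetter where
  elems := {.one, .two, .onebar, .twobar}
  complete := by intro x; cases x <;> simp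

open Classical

/-- Number of occurrences of the letter `x` among the first `k` letters of `w`. -/
noncomputable def cnt (m : ℕ) (w : Fin m → GLetter) (x : GLetter) (k : ℕ) : ℕ :=
  (Finset.univ.filter (fun i : Fin m => (i : ℕ) < k ∧ w i = x)).card

/-- Gessel word condition: every prefix has `N₂ ≥ N_{2̄}` and `N₁+N₂ ≥ N_{1̄}+N_{2̄}`. -/
def IsGessel (m : ℕ) (w : Fin m → GLetter) : Prop :=
  ∀ k ≤ m, cnt m w .twobar k ≤ cnt m w .two k ∧
    cnt m w .onebar k + cnt m w .twobar k ≤ cnt m w .one k + cnt m w .two k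

/-- Complete: equally many occurrences of each letter and its bar. -/
def IsCompleteGW (m : ℕ) (w : Fin m → GLetter) : Prop :=
  cnt m w .one m = cnt m w .onebar m ∧ cnt m w .two m = cnt m w .twobar m
/-- `C(m, z)` with the convention that it vanishes for negative lower index. -/
def choosez (m : ℕ) (z : ℤ) : ℕ := if z < 0 then 0 else m.choose z.toNat

/-- `a p q m`: the number of paths with steps `+1, -1` of length `m` from height `p`
to height `q` staying nonnegative, given by the reflection principle formula. -/
def aCount (p q : ℤ) (m : ℕ) : ℤ :=
  if ((m : ℤ) + p + q) % 2 = 0 then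
    (choosez m (((m : ℤ) + p - q) / 2) : ℤ) - choosez m (((m : ℤ) + p + q) / 2 + 1)
  else 0

open Finset

lemma choosez_of_neg {m : ℕ} {z : ℤ} (h : z < 0) : choosez m z = 0 := by
  simp [choosez, h]

lemma choosez_zero (z : ℤ) : choosez 0 z = if z = 0 then 1 else 0 := by
  rcases lt_trichotomy z 0 with h | rfl | h
  · rw [choosez_of_neg h, if_neg h.ne]
  · simp [choosez]
  · simp [choosez, h.not_gt, h.ne', Nat.choose_eq_zero_of_lt, Int.lt_toNat.mpr h]

lemma choosez_succ (m : ℕ) (z : ℤ) : choosez (m + 1) z = choosez m z + choosez m (z - 1) := by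
  rcases lt_trichotomy z 0 with h | rfl | h
  · simp [choosez_of_neg h, choosez_of_neg (show z - 1 < 0 by omega)]
  · simp [choosez]
  · have hz : z.toNat = (z - 1).toNat + 1 := by omega
    simp only [choosez, if_neg h.not_gt, if_neg (show ¬ z - 1 < 0 by omega), hz,
      Nat.choose_succ_succ', Nat.add_comm]

lemma aCount_succ (p q : ℤ) (m : ℕ) :
    aCount p q (m + 1) = aCount p (q + 1) m + aCount p (q - 1) m := by
  unfold aCount
  push_cast
  by_cases hpar : ((m : ℤ) + 1 + p + q) % 2 = 0
  · rw [if_pos hpar, if_pos (by omega), if_pos (by omega)]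
    have e₁ : ((m : ℤ) + p - (q + 1)) / 2 = ((m : ℤ) + 1 + p - q) / 2 - 1 := by omega
    have e₂ : ((m : ℤ) + p - (q - 1)) / 2 = ((m : ℤ) + 1 + p - q) / 2 := by omega
    have e₃ : ((m : ℤ) + p + (q + 1)) / 2 + 1 = ((m : ℤ) + 1 + p + q) / 2 + 1 := by omega
    have e₄ : ((m : ℤ) + p + (q - 1)) / 2 + 1 = ((m : ℤ) + 1 + p + q) / 2 + 1 - 1 := by omega
    rw [e₁, e₂, e₃, e₄, choosez_succ, choosez_succ]
    push_cast
    ring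
  · rw [if_neg hpar, if_neg (by omega), if_neg (by omega), add_zero]

-- The two binomials coincide.
lemma aCount_neg_one (p : ℤ) (m : ℕ) : aCount p (-1) m = 0 := by
  unfold aCount
  split_ifs
  · rw [show ((m : ℤ) + p - -1) / 2 = ((m : ℤ) + p + -1) / 2 + 1 by omega, sub_self]
  · rfl

lemma aCount_zero {p q : ℤ} (hp : 0 ≤ p) (hq : 0 ≤ q) :
    aCount p q 0 = if p = q then 1 else 0 := by
  unfold aCount
  simp only [Nat.cast_zero, zero_add, choosez_zero]
  split_ifs <;> omega

def pathStep (b : Bool) : ℤ := if b then 1 else -1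

def pathHeight {L : ℕ} (p : ℤ) (f : Fin L → Bool) (k : ℕ) : ℤ :=
  p + ∑ t ∈ range k, if h : t < L then pathStep (f ⟨t, h⟩) else 0

noncomputable def nonnegPaths (p q : ℤ) (L : ℕ) : Finset (Fin L → Bool) :=
  {f | (∀ k ≤ L, 0 ≤ pathHeight p f k) ∧ pathHeight p f L = q}

section Paths

variable {L : ℕ} {p q : ℤ}

@[simp]
lemma pathHeight_zero (p : ℤ) (f : Fin L → Bool) : pathHeight p f 0 = p := by
  simp [pathHeight]

lemma pathHeight_succ (p : ℤ) (f : Fin L → Bool) {k : ℕ} (hk : k < L) :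
    pathHeight p f (k + 1) = pathHeight p f k + pathStep (f ⟨k, hk⟩) := by
  simp [pathHeight, sum_range_succ, hk, add_assoc]

lemma pathHeight_sub_one (p : ℤ) (f : Fin L → Bool) (k : ℕ) :
    pathHeight (p - 1) f k = pathHeight p f k - 1 := by
  unfold pathHeight
  ring

lemma pathHeight_init (p : ℤ) (f : Fin (L + 1) → Bool) {k : ℕ} (hk : k ≤ L) :
    pathHeight p (Fin.init f) k = pathHeight p f k := by
  unfold pathHeight
  congr 1
  refine sum_congr rfl fun t ht => ?_
  have ht : t < L := by simp at ht; omega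
  simp [ht, show t < L + 1 by omega, Fin.init]

lemma mem_nonnegPaths {f : Fin L → Bool} :
    f ∈ nonnegPaths p q L ↔ (∀ k ≤ L, 0 ≤ pathHeight p f k) ∧ pathHeight p f L = q := by
  simp [nonnegPaths]

lemma nonnegPaths_of_neg (hq : q < 0) : nonnegPaths p q L = ∅ := by
  ext f
  simp only [mem_nonnegPaths, notMem_empty, iff_false, not_and]
  intro h hL
  linarith [h L le_rfl]

lemma card_nonnegPaths_zero (hp : 0 ≤ p) : #(nonnegPaths p q 0) = if p = q then 1 else 0 := by
  split_ifs with hpq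
  · rw [card_eq_one]
    exact ⟨Fin.elim0, by ext f; simp [mem_nonnegPaths, ← hpq, hp, Subsingleton.elim f Fin.elim0]⟩
  · rw [card_eq_zero, eq_empty_iff_forall_notMem]
    simp [mem_nonnegPaths, hpq]

lemma card_filter_last_eq (b : Bool) (hq : 0 ≤ q) :
    #{f ∈ nonnegPaths p q (L + 1) | f (Fin.last L) = b} = #(nonnegPaths p (q - pathStep b) L) := by
  have hlast (f : Fin (L + 1) → Bool) :
      pathHeight p f (L + 1) = pathHeight p (Fin.init f) L + pathStep (f (Fin.last L)) := by
    rw [pathHeight_succ p f (Nat.lt_succ_self L), pathHeight_init p f le_rfl]; rfl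
  refine card_nbij' Fin.init (Fin.snoc · b) (fun f hf => ?_) (fun g hg => ?_) (fun f hf => ?_)
    (fun g _ => Fin.init_snoc (α := fun _ => Bool) b g)
  · rw [mem_coe, mem_filter, mem_nonnegPaths] at hf
    refine mem_nonnegPaths.2 ⟨fun k hk => pathHeight_init p f hk ▸ hf.1.1 k (by omega), ?_⟩
    rw [← hf.1.2, hlast f, hf.2, add_sub_cancel_right]
  · rw [mem_coe, mem_nonnegPaths] at hg
    have hend := hlast (Fin.snoc g b)
    rw [Fin.init_snoc, Fin.snoc_last] at hend
    refine mem_filter.2 ⟨mem_nonnegPaths.2 ⟨fun k hk => ?_, by linarith [hg.2]⟩, Fin.snoc_last _ _⟩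
    rcases Nat.lt_or_ge k (L + 1) with hk' | hk'
    · rw [← pathHeight_init p _ (by omega), Fin.init_snoc]
      exact hg.1 k (by omega)
    · rw [show k = L + 1 by omega, hend]
      linarith [hg.2]
  · rw [mem_coe, mem_filter] at hf
    simp only [← hf.2, Fin.snoc_init_self]

lemma card_nonnegPaths_succ (hq : 0 ≤ q) :
    #(nonnegPaths p q (L + 1)) = #(nonnegPaths p (q + 1) L) + #(nonnegPaths p (q - 1) L) := by
  rw [card_eq_sum_card_fiberwise (f := fun f => f (Fin.last L)) (t := univ)
    (fun _ _ => mem_coe.2 (mem_univ _)), Fintype.sum_bool, card_filter_last_eq true hq,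
    card_filter_last_eq false hq, add_comm]
  simp [pathStep, sub_neg_eq_add]

end Paths

lemma aCount_eq_card_nonnegPaths (m : ℕ) {p q : ℤ} (hp : 0 ≤ p) (hq : -1 ≤ q) :
    aCount p q m = #(nonnegPaths p q m) := by
  induction m generalizing q with
  | zero =>
    rcases hq.eq_or_lt with rfl | hq
    · simp [aCount_neg_one, nonnegPaths_of_neg]
    · rw [aCount_zero hp (by omega), card_nonnegPaths_zero hp]
      split_ifs <;> simp
  | succ m ih =>
    rcases hq.eq_or_lt with rfl | hq
    · simp [aCount_neg_one, nonnegPaths_of_neg]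
    · rw [aCount_succ, card_nonnegPaths_succ (by omega), ih (by omega), ih (by omega)]
      norm_cast

def GLetter.ofBool : Bool → GLetter
  | true => .two
  | false => .twobar

@[simp] lemma GLetter.ofBool_ne_one (b : Bool) : GLetter.ofBool b ≠ .one := by
  cases b <;> simp [GLetter.ofBool]

@[simp] lemma GLetter.ofBool_ne_onebar (b : Bool) : GLetter.ofBool b ≠ .onebar := by
  cases b <;> simp [GLetter.ofBool]

def GLetter.twoStep : GLetter → ℤ
  | .two => 1
  | .twobar => -1
  | _ => 0

noncomputable def twoExcess {m : ℕ} (w : Fin m → GLetter) (k : ℕ) : ℤ :=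
  cnt m w .two k - cnt m w .twobar k

def SpellsAt {m L : ℕ} (w : Fin m → GLetter) (c : ℕ) (f : Fin L → Bool) : Prop :=
  ∀ (t : Fin m) (r : Fin L), (t : ℕ) = c + r → w t = GLetter.ofBool (f r)

section Words

variable {m : ℕ} {w : Fin m → GLetter}

lemma cnt_zero (w : Fin m → GLetter) (x : GLetter) : cnt m w x 0 = 0 := by
  simp [cnt]

lemma cnt_succ (w : Fin m → GLetter) (x : GLetter) {k : ℕ} (hk : k < m) :
    cnt m w x (k + 1) = cnt m w x k + if w ⟨k, hk⟩ = x then 1 else 0 := by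
  unfold cnt
  simp only [Nat.lt_succ_iff_lt_or_eq, or_and_right, filter_or]
  rw [card_union_of_disjoint (disjoint_filter.2 fun t _ h₁ h₂ => by omega)]
  congr 1
  have hval (t : Fin m) : (t : ℕ) = k ↔ t = ⟨k, hk⟩ := (Fin.ext_iff (b := ⟨k, hk⟩)).symm
  split_ifs with hx <;> simp [hval, filter_and, filter_eq', hx]

lemma cnt_le (w : Fin m → GLetter) (x : GLetter) (k : ℕ) : cnt m w x k ≤ k :=
  calc cnt m w x k ≤ #(range k) :=
        card_le_card_of_injOn Fin.val (fun t ht => by simp_all) Fin.val_injective.injOn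
    _ = k := card_range k

lemma cnt_eq_ite_of_unique {x : GLetter} {a : ℕ} (ha : a < m)
    (hw : ∀ t : Fin m, w t = x ↔ (t : ℕ) = a) (k : ℕ) :
    cnt m w x k = if a < k then 1 else 0 := by
  unfold cnt
  split_ifs with hak
  · rw [card_eq_one]
    refine ⟨⟨a, ha⟩, ?_⟩
    ext t
    simp [hw, Fin.ext_iff]
    omega
  · rw [card_eq_zero, filter_eq_empty_iff]
    intro t _ ⟨ht, hwt⟩
    have := (hw t).1 hwt
    omega

lemma twoExcess_zero (w : Fin m → GLetter) : twoExcess w 0 = 0 := by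
  simp [twoExcess, cnt_zero]

lemma twoExcess_succ (w : Fin m → GLetter) {k : ℕ} (hk : k < m) :
    twoExcess w (k + 1) = twoExcess w k + (w ⟨k, hk⟩).twoStep := by
  unfold twoExcess
  rw [cnt_succ w _ hk, cnt_succ w _ hk]
  cases w ⟨k, hk⟩ <;> simp [GLetter.twoStep] <;> ring

lemma twoExcess_le (w : Fin m → GLetter) (k : ℕ) : twoExcess w k ≤ k := by
  have := cnt_le w .two k
  unfold twoExcess
  omega

lemma twoExcess_add_eq_pathHeight {c L : ℕ} {f : Fin L → Bool} (h : SpellsAt w c f)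
    (hcL : c + L ≤ m) : ∀ r ≤ L, twoExcess w (c + r) = pathHeight (twoExcess w c) f r := by
  intro r hr
  induction r with
  | zero => simp
  | succ r ih =>
    rw [← add_assoc, twoExcess_succ w (by omega), pathHeight_succ _ f (by omega), ih (by omega),
      h ⟨c + r, by omega⟩ ⟨r, by omega⟩ rfl]
    cases f ⟨r, by omega⟩ <;> rfl

end Words

abbrev OnebarOneAt {m : ℕ} (i j : ℕ) (w : Fin m → GLetter) : Prop :=
  ∀ t : Fin m, (w t = .onebar ↔ (t : ℕ) + 1 = i) ∧ (w t = .one ↔ (t : ℕ) + 1 = j)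

section FixedPositions

variable {m i j : ℕ} {w : Fin m → GLetter}

lemma OnebarOneAt.cnt_onebar (hw : OnebarOneAt i j w) (hi : 1 ≤ i) (him : i ≤ m) (k : ℕ) :
    cnt m w .onebar k = if i ≤ k then 1 else 0 := by
  rw [cnt_eq_ite_of_unique (a := i - 1) (by omega) (fun t => by rw [(hw t).1]; omega)]
  split_ifs <;> omega

lemma OnebarOneAt.cnt_one (hw : OnebarOneAt i j w) (hj : 1 ≤ j) (hjm : j ≤ m) (k : ℕ) :
    cnt m w .one k = if j ≤ k then 1 else 0 := by
  rw [cnt_eq_ite_of_unique (a := j - 1) (by omega) (fun t => by rw [(hw t).2]; omega)]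
  split_ifs <;> omega

lemma OnebarOneAt.two_or_twobar (hw : OnebarOneAt i j w) {t : Fin m} (hti : (t : ℕ) + 1 ≠ i)
    (htj : (t : ℕ) + 1 ≠ j) : w t = .two ∨ w t = .twobar := by
  cases h : w t <;> simp_all [hw t]

lemma OnebarOneAt.twoExcess_eq (hw : OnebarOneAt i j w) (hi : 1 ≤ i) (hij : i < j) (hj : j ≤ m) :
    twoExcess w i = twoExcess w (i - 1) ∧ twoExcess w j = twoExcess w (j - 1) := by
  obtain ⟨i, rfl⟩ : ∃ i', i = i' + 1 := ⟨i - 1, by omega⟩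
  obtain ⟨j, rfl⟩ : ∃ j', j = j' + 1 := ⟨j - 1, by omega⟩
  rw [twoExcess_succ w (by omega), twoExcess_succ w (by omega), (hw _).1.2 rfl, (hw _).2.2 rfl]
  simp [GLetter.twoStep]

lemma OnebarOneAt.isGessel_iff (hw : OnebarOneAt i j w) (hi : 1 ≤ i) (hij : i < j) (hj : j ≤ m) :
    IsGessel m w ↔ ∀ k ≤ m, 0 ≤ twoExcess w k ∧ (i ≤ k → k < j → 1 ≤ twoExcess w k) := by
  refine forall₂_congr fun k _ => ?_
  rw [hw.cnt_onebar hi (by omega), hw.cnt_one (by omega) hj, twoExcess]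
  split_ifs <;> omega

lemma OnebarOneAt.isCompleteGW_iff (hw : OnebarOneAt i j w) (hi : 1 ≤ i) (hij : i < j)
    (hj : j ≤ m) : IsCompleteGW m w ↔ twoExcess w m = 0 := by
  rw [IsCompleteGW, hw.cnt_onebar hi (by omega), hw.cnt_one (by omega) hj, twoExcess,
    if_pos (by omega), if_pos (by omega)]
  omega

lemma forall_le_iff_three_ranges {D : ℕ → ℤ} (hi : 1 ≤ i) (hij : i < j) (hj : j ≤ m) :
    (∀ k ≤ m, 0 ≤ D k ∧ (i ≤ k → k < j → 1 ≤ D k)) ↔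
      (∀ r ≤ i - 1, 0 ≤ D r) ∧ (∀ r ≤ j - i - 1, 1 ≤ D (i + r)) ∧ (∀ r ≤ m - j, 0 ≤ D (j + r)) := by
  constructor
  · intro h
    exact ⟨fun r hr => (h r (by omega)).1,
      fun r hr => (h (i + r) (by omega)).2 (by omega) (by omega),
      fun r hr => (h (j + r) (by omega)).1⟩
  · rintro ⟨h₁, h₂, h₃⟩ k hk
    rcases Nat.lt_or_ge k i with hki | hki
    · exact ⟨h₁ k (by omega), by omega⟩
    rcases Nat.lt_or_ge k j with hkj | hkj
    · have := h₂ (k - i) (by omega)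
      rw [Nat.add_sub_cancel' hki] at this
      exact ⟨by omega, fun _ _ => this⟩
    · have := h₃ (k - j) (by omega)
      rw [Nat.add_sub_cancel' hkj] at this
      exact ⟨this, by omega⟩

end FixedPositions

section Decomposition

variable {m i j : ℕ} {w : Fin m → GLetter}
  {f₁ : Fin (i - 1) → Bool} {f₂ : Fin (j - i - 1) → Bool} {f₃ : Fin (m - j) → Bool}

theorem OnebarOneAt.gessel_complete_iff_mem_nonnegPaths (hw : OnebarOneAt i j w) (hi : 1 ≤ i) (hij : i < j)
    (hj : j ≤ m) (h₁ : SpellsAt w 0 f₁) (h₂ : SpellsAt w i f₂) (h₃ : SpellsAt w j f₃)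
    (k₁ k₂ : ℤ) :
    ((IsGessel m w ∧ IsCompleteGW m w) ∧ twoExcess w (i - 1) = k₁ ∧ twoExcess w (j - 1) = k₂) ↔
      f₁ ∈ nonnegPaths 0 k₁ (i - 1) ∧ f₂ ∈ nonnegPaths (k₁ - 1) (k₂ - 1) (j - i - 1) ∧
        f₃ ∈ nonnegPaths k₂ 0 (m - j) := by
  obtain ⟨hDi, hDj⟩ := hw.twoExcess_eq hi hij hj
  have e₁ : ∀ r ≤ i - 1, twoExcess w r = pathHeight 0 f₁ r := by
    simpa [twoExcess_zero] using twoExcess_add_eq_pathHeight h₁ (by omega)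
  have e₂ : ∀ r ≤ j - i - 1, twoExcess w (i + r) = pathHeight (twoExcess w (i - 1)) f₂ r := by
    rw [← hDi]; exact twoExcess_add_eq_pathHeight h₂ (by omega)
  have e₃ : ∀ r ≤ m - j, twoExcess w (j + r) = pathHeight (twoExcess w (j - 1)) f₃ r := by
    rw [← hDj]; exact twoExcess_add_eq_pathHeight h₃ (by omega)
  have end₁ := e₁ (i - 1) le_rfl
  have end₂ := e₂ (j - i - 1) le_rfl
  have end₃ := e₃ (m - j) le_rfl
  rw [show i + (j - i - 1) = j - 1 by omega] at end₂
  rw [Nat.add_sub_cancel' hj] at end₃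
  rw [hw.isGessel_iff hi hij hj, hw.isCompleteGW_iff hi hij hj,
    forall_le_iff_three_ranges hi hij hj]
  simp only [mem_nonnegPaths, pathHeight_sub_one]
  constructor
  · rintro ⟨⟨⟨g₁, g₂, g₃⟩, hm⟩, rfl, rfl⟩
    exact ⟨⟨fun r hr => e₁ r hr ▸ g₁ r hr, end₁.symm⟩,
      ⟨fun r hr => by linarith [e₂ r hr, g₂ r hr], by linarith⟩,
      ⟨fun r hr => e₃ r hr ▸ g₃ r hr, end₃ ▸ hm⟩⟩
  · rintro ⟨⟨g₁, hk₁⟩, ⟨g₂, hk₂⟩, ⟨g₃, hk₃⟩⟩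
    obtain rfl : twoExcess w (i - 1) = k₁ := end₁.trans hk₁
    obtain rfl : twoExcess w (j - 1) = k₂ := by linarith
    exact ⟨⟨⟨fun r hr => e₁ r hr ▸ g₁ r hr, fun r hr => by linarith [e₂ r hr, g₂ r hr],
      fun r hr => e₃ r hr ▸ g₃ r hr⟩, end₃.trans hk₃⟩, rfl, rfl⟩

end Decomposition

def readPath {m : ℕ} (w : Fin m → GLetter) (c L : ℕ) : Fin L → Bool :=
  fun r => if h : c + r < m then decide (w ⟨c + r, h⟩ = .two) else false

def splitWord {m : ℕ} (i j : ℕ) (w : Fin m → GLetter) :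
    (Fin (i - 1) → Bool) × (Fin (j - i - 1) → Bool) × (Fin (m - j) → Bool) :=
  (readPath w 0 (i - 1), readPath w i (j - i - 1), readPath w j (m - j))

def joinPaths {m : ℕ} (i j : ℕ)
    (f : (Fin (i - 1) → Bool) × (Fin (j - i - 1) → Bool) × (Fin (m - j) → Bool)) :
    Fin m → GLetter := fun t =>
  if h₁ : (t : ℕ) < i - 1 then .ofBool (f.1 ⟨t, h₁⟩)
  else if _ : (t : ℕ) = i - 1 then .onebar
  else if h₂ : (t : ℕ) < j - 1 then .ofBool (f.2.1 ⟨t - i, by omega⟩)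
  else if _ : (t : ℕ) = j - 1 then .one
  else .ofBool (f.2.2 ⟨t - j, by omega⟩)

section Split

variable {m i j : ℕ} {w : Fin m → GLetter}

lemma spellsAt_readPath {c L : ℕ}
    (h : ∀ t : Fin m, c ≤ t → (t : ℕ) < c + L → w t = .two ∨ w t = .twobar) :
    SpellsAt w c (readPath w c L) := by
  intro t r htr
  have hrt : (⟨c + r, htr ▸ t.isLt⟩ : Fin m) = t := Fin.ext htr.symm
  simp only [readPath, dif_pos (htr ▸ t.isLt), hrt]
  rcases h t (by omega) (by omega) with h | h <;> simp [h, GLetter.ofBool]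

lemma readPath_eq_of_spellsAt {c L : ℕ} {f : Fin L → Bool} (h : SpellsAt w c f)
    (hcL : c + L ≤ m) : readPath w c L = f := by
  funext r
  rw [readPath, dif_pos (by omega), h _ r rfl]
  cases f r <;> rfl

lemma OnebarOneAt.spellsAt_splitWord (hw : OnebarOneAt i j w) (hij : i < j) :
    SpellsAt w 0 (splitWord i j w).1 ∧ SpellsAt w i (splitWord i j w).2.1 ∧
      SpellsAt w j (splitWord i j w).2.2 :=
  ⟨spellsAt_readPath fun t _ _ => hw.two_or_twobar (t := t) (by omega) (by omega),
    spellsAt_readPath fun t _ _ => hw.two_or_twobar (t := t) (by omega) (by omega),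
    spellsAt_readPath fun t _ _ => hw.two_or_twobar (t := t) (by omega) (by omega)⟩

lemma OnebarOneAt.eq_joinPaths (hw : OnebarOneAt i j w) (hi : 1 ≤ i) (hij : i < j)
    {f₁ : Fin (i - 1) → Bool} {f₂ : Fin (j - i - 1) → Bool} {f₃ : Fin (m - j) → Bool}
    (h₁ : SpellsAt w 0 f₁) (h₂ : SpellsAt w i f₂) (h₃ : SpellsAt w j f₃) :
    w = joinPaths i j (f₁, f₂, f₃) := by
  funext t
  unfold joinPaths
  split_ifs
  · exact h₁ t _ (by simp)
  · exact (hw t).1.2 (by omega)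
  · exact h₂ t _ (by simp; omega)
  · exact (hw t).2.2 (by omega)
  · exact h₃ t _ (by simp; omega)

variable (f : (Fin (i - 1) → Bool) × (Fin (j - i - 1) → Bool) × (Fin (m - j) → Bool))

lemma onebarOneAt_joinPaths (hi : 1 ≤ i) (hij : i < j) : OnebarOneAt i j (joinPaths i j f) := by
  intro t
  unfold joinPaths
  split_ifs <;> simp <;> omega

lemma spellsAt_joinPaths (hi : 1 ≤ i) (hij : i < j) :
    SpellsAt (joinPaths i j f) 0 f.1 ∧ SpellsAt (joinPaths i j f) i f.2.1 ∧
      SpellsAt (joinPaths i j f) j f.2.2 := by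
  refine ⟨fun t r htr => ?_, fun t r htr => ?_, fun t r htr => ?_⟩ <;>
  · have := r.isLt
    unfold joinPaths
    split_ifs <;> first
      | omega
      | exact congrArg (GLetter.ofBool ∘ _) (Fin.ext (by dsimp only; omega))

lemma splitWord_joinPaths (hi : 1 ≤ i) (hij : i < j) (hj : j ≤ m) :
    splitWord i j (joinPaths i j f) = f := by
  obtain ⟨h₁, h₂, h₃⟩ := spellsAt_joinPaths f hi hij
  simp only [splitWord, readPath_eq_of_spellsAt h₁ (by omega),
    readPath_eq_of_spellsAt h₂ (by omega), readPath_eq_of_spellsAt h₃ (by omega)]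

end Split

noncomputable def fixedGesselWords (m i j : ℕ) : Finset (Fin m → GLetter) :=
  {w | IsGessel m w ∧ IsCompleteGW m w ∧ OnebarOneAt i j w}

section Counting

variable {m i j : ℕ}

lemma mem_fixedGesselWords {w : Fin m → GLetter} :
    w ∈ fixedGesselWords m i j ↔ IsGessel m w ∧ IsCompleteGW m w ∧ OnebarOneAt i j w := by
  simp [fixedGesselWords]

lemma OnebarOneAt.twoExcess_toNat_mem {w : Fin m → GLetter} (hw : OnebarOneAt i j w)
    (hG : IsGessel m w) (hi : 1 ≤ i) (hij : i < j) (hj : j ≤ m) :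
    ((twoExcess w (i - 1)).toNat, (twoExcess w (j - 1)).toNat) ∈
      Icc 1 (i - 1) ×ˢ Icc 0 (j - 1) := by
  have hD := (hw.isGessel_iff hi hij hj).1 hG
  have h₁ : 1 ≤ twoExcess w (i - 1) :=
    (hw.twoExcess_eq hi hij hj).1 ▸ (hD i (by omega)).2 le_rfl hij
  have h₂ := (hD (j - 1) (by omega)).1
  have h₁' := twoExcess_le w (i - 1)
  have h₂' := twoExcess_le w (j - 1)
  simp only [mem_product, mem_Icc]
  omega

lemma card_fiber_eq_card_product (hi : 1 ≤ i) (hij : i < j) (hj : j ≤ m) (k₁ k₂ : ℕ) :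
    #{w ∈ fixedGesselWords m i j |
        ((twoExcess w (i - 1)).toNat, (twoExcess w (j - 1)).toNat) = (k₁, k₂)} =
      #(nonnegPaths 0 k₁ (i - 1) ×ˢ nonnegPaths (k₁ - 1) (k₂ - 1) (j - i - 1) ×ˢ
        nonnegPaths k₂ 0 (m - j)) := by
  refine card_nbij' (splitWord i j) (joinPaths i j) (fun w hw => ?_) (fun f hf => ?_)
    (fun w hw => ?_) (fun f _ => splitWord_joinPaths f hi hij hj)
  · rw [mem_coe, mem_filter, mem_fixedGesselWords, Prod.mk.injEq] at hw
    obtain ⟨⟨hG, hC, hw⟩, hk₁, hk₂⟩ := hw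
    obtain ⟨h₁, h₂, h₃⟩ := hw.spellsAt_splitWord hij
    have hD := (hw.isGessel_iff hi hij hj).1 hG
    have h₁' := (hD (i - 1) (by omega)).1
    have h₂' := (hD (j - 1) (by omega)).1
    simpa [mem_product] using
      (hw.gessel_complete_iff_mem_nonnegPaths hi hij hj h₁ h₂ h₃ k₁ k₂).1 ⟨⟨hG, hC⟩, by omega, by omega⟩
  · simp only [coe_product, Set.mem_prod, mem_coe] at hf
    have hw := onebarOneAt_joinPaths f hi hij
    obtain ⟨h₁, h₂, h₃⟩ := spellsAt_joinPaths f hi hij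
    obtain ⟨⟨hG, hC⟩, hk₁, hk₂⟩ := (hw.gessel_complete_iff_mem_nonnegPaths hi hij hj h₁ h₂ h₃ k₁ k₂).2 hf
    rw [mem_coe, mem_filter, mem_fixedGesselWords, Prod.mk.injEq, hk₁, hk₂]
    exact ⟨⟨hG, hC, hw⟩, Int.toNat_natCast k₁, Int.toNat_natCast k₂⟩
  · obtain ⟨-, -, hw⟩ := mem_fixedGesselWords.1 (mem_filter.1 hw).1
    obtain ⟨h₁, h₂, h₃⟩ := hw.spellsAt_splitWord hij
    exact (hw.eq_joinPaths hi hij h₁ h₂ h₃).symm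

end Counting

/-- Fix `1 ≤ i < j ≤ 2n`. The number of complete Gessel words of length `2n` with the
single `1̄` at position `i` and the single `1` at position `j` equals
`∑_{k₁=1}^{i-1} ∑_{k₂=0}^{j-1} a_{0,k₁}(i-1) a_{k₁-1,k₂-1}(j-i-1) a_{k₂,0}(2n-j)`. -/
theorem gessel_onebar_one_fixed_positions (n i j : ℕ) (hi : 1 ≤ i) (hij : i < j)
    (hj : j ≤ 2 * n) :
    (((Finset.univ : Finset (Fin (2 * n) → GLetter)).filter
      (fun w => IsGessel (2 * n) w ∧ IsCompleteGW (2 * n) w ∧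
        (∀ t : Fin (2 * n), (w t = .onebar ↔ (t : ℕ) + 1 = i) ∧
          (w t = .one ↔ (t : ℕ) + 1 = j)))).card : ℤ)
    = ∑ k₁ ∈ Finset.Icc 1 (i - 1), ∑ k₂ ∈ Finset.Icc 0 (j - 1),
        aCount 0 (k₁ : ℤ) (i - 1) * aCount ((k₁ : ℤ) - 1) ((k₂ : ℤ) - 1) (j - i - 1) *
          aCount (k₂ : ℤ) 0 (2 * n - j) := by
  change (#(fixedGesselWords (2 * n) i j) : ℤ) = _
  have hmaps (w) (hw : w ∈ fixedGesselWords (2 * n) i j) :=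
    (mem_fixedGesselWords.1 hw).2.2.twoExcess_toNat_mem (mem_fixedGesselWords.1 hw).1 hi hij hj
  rw [card_eq_sum_card_fiberwise hmaps, sum_product]
  push_cast
  refine sum_congr rfl fun k₁ hk₁ => sum_congr rfl fun k₂ hk₂ => ?_
  rw [mem_Icc] at hk₁ hk₂
  rw [card_fiber_eq_card_product hi hij hj, card_product, card_product,
    aCount_eq_card_nonnegPaths _ le_rfl (by omega),
    aCount_eq_card_nonnegPaths _ (by omega) (by omega),
    aCount_eq_card_nonnegPaths (q := 0) _ (by omega) (by norm_num)]
  push_cast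
  ring
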